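/- arXiv:1603.00006 — 3 statements merged into one kernel-verified Lean document; each statement's English description precedes it below -/
import Mathlib

section
/- For every natural number n, with m = 2^n, every maximal set of distinct Hadamard vectors in dimension m can be partitioned into exactly 2^(2^n - n - 1) Hadamard matrices; that is, S is the disjoint union of 2^(2^n - n - 1) subsets of size m, each of which is the set of rows of an m×m Hadamard matrix. -/
/-!
Write a Hadamard vector indexed by `𝔽₂ⁿ` as `(-1) ^ f` for a Boolean function `f : 𝔽₂ⁿ → 𝔽₂`;
then `±x` correspond to `f` and `f + 1`. The affine functions `v ↦ a ⬝ᵥ v + c` form a subgroup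
`U` of order `2 ^ (n + 1)`. For a fixed `f`, the vectors `(-1) ^ (f + ℓ)` with `ℓ` linear are
pairwise orthogonal, since the product of two of them is a nontrivial character of `𝔽₂ⁿ`.
So each of the `2 ^ (2 ^ n) / 2 ^ (n + 1)` cosets of `U` contains exactly `2 ^ n` classes `±x`,
and their representatives in `S` are the rows of a Hadamard matrix.
-/

/-- A Hadamard vector: all entries are `±1`. -/
def IsHadamardVector {ι : Type*} (x : ι → ℝ) : Prop :=
  ∀ i, x i = 1 ∨ x i = -1

/-- A Hadamard matrix: all entries `±1` and rows pairwise orthogonal. -/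
def IsHadamardMatrix {ι : Type*} [Fintype ι] (H : Matrix ι ι ℝ) : Prop :=
  (∀ i j, H i j = 1 ∨ H i j = -1) ∧
  ∀ i j, i ≠ j → ∑ k, H i k * H j k = 0

/-- A maximal set of distinct Hadamard vectors: a set of Hadamard vectors containing,
for every Hadamard vector `x`, exactly one of `x`, `-x`. -/
def IsMaximalHadamardSet {ι : Type*} (S : Set (ι → ℝ)) : Prop :=
  (∀ x ∈ S, IsHadamardVector x) ∧
  ∀ x : ι → ℝ, IsHadamardVector x → Xor' (x ∈ S) (-x ∈ S)

lemma zmod_two_eq_zero_or_eq_one (s : ZMod 2) : s = 0 ∨ s = 1 := by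
  revert s
  decide

noncomputable def signChar : AddChar (ZMod 2) ℝ :=
  AddChar.zmodChar 2 (by norm_num : (-1 : ℝ) ^ 2 = 1)

lemma signChar_zero : signChar 0 = 1 := AddChar.map_zero_eq_one _

lemma signChar_one : signChar 1 = -1 := by
  simp [signChar, AddChar.zmodChar_apply, ZMod.val_one]

lemma signChar_eq_one_or_eq_neg_one (s : ZMod 2) : signChar s = 1 ∨ signChar s = -1 := by
  obtain rfl | rfl := zmod_two_eq_zero_or_eq_one s
  exacts [.inl signChar_zero, .inr signChar_one]

lemma signChar_injective : Function.Injective signChar := by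
  intro s t h
  obtain rfl | rfl := zmod_two_eq_zero_or_eq_one s <;>
    obtain rfl | rfl := zmod_two_eq_zero_or_eq_one t <;>
    first | rfl | norm_num [signChar_zero, signChar_one] at h

lemma signChar_add_one (s : ZMod 2) : signChar (s + 1) = -signChar s := by
  rw [AddChar.map_add_eq_mul, signChar_one, mul_neg_one]

lemma sum_signChar_dotProduct {n : ℕ} {c : Fin n → ZMod 2} (hc : c ≠ 0) :
    ∑ v : Fin n → ZMod 2, signChar (c ⬝ᵥ v) = 0 := by
  let ψ : AddChar (Fin n → ZMod 2) ℝ :=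
    { toFun := fun v => signChar (c ⬝ᵥ v)
      map_zero_eq_one' := by simp
      map_add_eq_mul' := fun v w => by simp [dotProduct_add, AddChar.map_add_eq_mul] }
  obtain ⟨j, hj⟩ := Function.ne_iff.mp hc
  have hψ : ψ ≠ 1 := AddChar.ne_one_iff.mpr ⟨Pi.single j 1, by
    change signChar (c ⬝ᵥ Pi.single j 1) ≠ 1
    rw [dotProduct_single, mul_one, (zmod_two_eq_zero_or_eq_one _).resolve_left hj, signChar_one]
    norm_num⟩
  exact AddChar.sum_eq_zero_of_ne_one hψ

section signVec

variable {ι : Type*}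

noncomputable def signVec (g : ι → ZMod 2) : ι → ℝ := fun i => signChar (g i)

lemma isHadamardVector_signVec (g : ι → ZMod 2) : IsHadamardVector (signVec g) :=
  fun i => signChar_eq_one_or_eq_neg_one (g i)

lemma signVec_injective : Function.Injective (signVec (ι := ι)) :=
  fun _ _ h => funext fun i => signChar_injective (congrFun h i)

lemma signVec_add_one (g : ι → ZMod 2) : signVec (g + 1) = -signVec g :=
  funext fun i => signChar_add_one (g i)

lemma IsHadamardVector.exists_signVec_eq {x : ι → ℝ} (hx : IsHadamardVector x) :
    ∃ g, signVec g = x := by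
  have h : ∀ i, ∃ s, signChar s = x i := fun i =>
    (hx i).elim (fun h => ⟨0, signChar_zero.trans h.symm⟩)
      (fun h => ⟨1, signChar_one.trans h.symm⟩)
  choose g hg using h
  exact ⟨g, funext hg⟩

lemma signVec_mul_signVec (g g' : ι → ZMod 2) (i : ι) :
    signVec g i * signVec g' i = signChar ((g - g') i) := by
  rw [signVec, signVec, ← AddChar.map_add_eq_mul, Pi.sub_apply, CharTwo.sub_eq_add]

end signVec

section signRep

variable {ι : Type*} {S : Set (ι → ℝ)}

open Classical in
noncomputable def signRep (S : Set (ι → ℝ)) (g : ι → ZMod 2) : ι → ℝ :=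
  if signVec g ∈ S then signVec g else -signVec g

lemma signRep_eq_or_eq_neg (g : ι → ZMod 2) :
    signRep S g = signVec g ∨ signRep S g = -signVec g := by
  unfold signRep
  split_ifs
  exacts [.inl rfl, .inr rfl]

lemma signRep_of_mem {g : ι → ZMod 2} (hg : signVec g ∈ S) : signRep S g = signVec g :=
  if_pos hg

lemma signRep_mem (hS : IsMaximalHadamardSet S) (g : ι → ZMod 2) : signRep S g ∈ S := by
  unfold signRep
  split_ifs with hg
  · exact hg
  · exact ((hS.2 _ (isHadamardVector_signVec g)).resolve_left fun h => hg h.1).1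

lemma signRep_add_one (hS : IsMaximalHadamardSet S) (g : ι → ZMod 2) :
    signRep S (g + 1) = signRep S g := by
  rcases hS.2 _ (isHadamardVector_signVec g) with ⟨hg, hng⟩ | ⟨hng, hg⟩
  · rw [signRep_of_mem hg, signRep, signVec_add_one, if_neg hng, neg_neg]
  · rw [signRep_of_mem (by rwa [signVec_add_one]), signVec_add_one, signRep, if_neg hg]

lemma signRep_add_const (hS : IsMaximalHadamardSet S) (g : ι → ZMod 2) (c : ZMod 2) :
    signRep S (g + Function.const ι c) = signRep S g := by
  obtain rfl | rfl := zmod_two_eq_zero_or_eq_one c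
  · rw [Function.const_zero, add_zero]
  · rw [Function.const_one, signRep_add_one hS]

lemma eq_or_eq_add_one_of_signRep_eq {g g' : ι → ZMod 2} (h : signRep S g = signRep S g') :
    g' = g ∨ g' = g + 1 := by
  have key : signVec g' = signVec g ∨ signVec g' = -signVec g := by
    rcases signRep_eq_or_eq_neg (S := S) g with hg | hg <;>
      rcases signRep_eq_or_eq_neg (S := S) g' with hg' | hg' <;> rw [hg, hg'] at h
    · exact .inl h.symm
    · exact .inr (by rw [h, neg_neg])
    · exact .inr h.symm
    · exact .inl (neg_inj.mp h.symm)
  rw [← signVec_add_one] at key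
  exact key.imp (fun h => signVec_injective h) (fun h => signVec_injective h)

lemma sum_signRep_mul_signRep [Fintype ι] {g g' : ι → ZMod 2}
    (h : ∑ i, signVec g i * signVec g' i = 0) : ∑ i, signRep S g i * signRep S g' i = 0 := by
  rcases signRep_eq_or_eq_neg (S := S) g with hg | hg <;>
  rcases signRep_eq_or_eq_neg (S := S) g' with hg' | hg' <;>
  simp [hg, hg', h, Finset.sum_neg_distrib]

end signRep

section affine

variable {ι : Type*} {n : ℕ} (e : ι ≃ (Fin n → ZMod 2))

def affineHom : (Fin n → ZMod 2) × ZMod 2 →+ (ι → ZMod 2) :=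
  AddMonoidHom.mk' (fun p i => p.1 ⬝ᵥ e i + p.2) fun p q => by
    funext i
    simp only [Prod.fst_add, Prod.snd_add, add_dotProduct, Pi.add_apply]
    abel

lemma affineHom_apply (a : Fin n → ZMod 2) (c : ZMod 2) (i : ι) :
    affineHom e (a, c) i = a ⬝ᵥ e i + c := rfl

lemma affineHom_zero_left (c : ZMod 2) : affineHom e (0, c) = Function.const ι c := by
  funext i
  simp [affineHom_apply]

lemma affineHom_injective : Function.Injective (affineHom e) := by
  rw [injective_iff_map_eq_zero]
  rintro ⟨a, c⟩ h
  have h' : ∀ v, a ⬝ᵥ v + c = 0 := fun v => by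
    simpa [affineHom_apply] using congrFun h (e.symm v)
  have hc : c = 0 := by simpa using h' 0
  have ha : a = 0 := funext fun j => by simpa [hc] using h' (Pi.single j 1)
  rw [ha, hc, Prod.mk_zero_zero]

def affineSubgroup : AddSubgroup (ι → ZMod 2) := (affineHom e).range

lemma card_quotient_affineSubgroup [Finite ι] :
    Nat.card ((ι → ZMod 2) ⧸ affineSubgroup e) = 2 ^ (2 ^ n - n - 1) := by
  have hι : Nat.card ι = 2 ^ n := by simp [Nat.card_congr e]
  have hU : Nat.card (affineSubgroup e) = 2 ^ (n + 1) := by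
    rw [affineSubgroup, ← Nat.card_congr (AddMonoidHom.ofInjective (affineHom_injective e)).toEquiv]
    simp [pow_succ]
  have h := (affineSubgroup e).card_eq_card_quotient_mul_card_addSubgroup
  rw [Nat.card_fun, hι, hU, Nat.card_zmod, ← Nat.pow_sub_mul_pow 2 Nat.lt_two_pow_self] at h
  rw [Nat.sub_sub]
  exact (Nat.eq_of_mul_eq_mul_right (by positivity) h).symm

lemma mk_add_affineHom (x : ι → ZMod 2) (p : (Fin n → ZMod 2) × ZMod 2) :
    (QuotientAddGroup.mk (x + affineHom e p) : (ι → ZMod 2) ⧸ affineSubgroup e) = x :=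
  QuotientAddGroup.mk_add_of_mem x ⟨p, rfl⟩

lemma sum_signVec_add_affineHom_mul_eq_zero (x : ι → ZMod 2) [Fintype ι]
    {a b : Fin n → ZMod 2} (hab : a ≠ b) :
    ∑ i, signVec (x + affineHom e (a, 0)) i * signVec (x + affineHom e (b, 0)) i = 0 := by
  calc ∑ i, signVec (x + affineHom e (a, 0)) i * signVec (x + affineHom e (b, 0)) i
      = ∑ i, signChar ((a - b) ⬝ᵥ e i) := by
        simp_rw [signVec_mul_signVec, add_sub_add_left_eq_sub, ← map_sub, Prod.mk_sub_mk,
          sub_zero, affineHom_apply, add_zero]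
    _ = ∑ v, signChar ((a - b) ⬝ᵥ v) := e.sum_comp fun v => signChar ((a - b) ⬝ᵥ v)
    _ = 0 := sum_signChar_dotProduct (sub_ne_zero.mpr hab)

end affine

section cosetMatrix

variable {ι : Type*} {n : ℕ} (e : ι ≃ (Fin n → ZMod 2)) {S : Set (ι → ℝ)}

local notation "Q" => (ι → ZMod 2) ⧸ affineSubgroup e

variable (S) in
noncomputable def cosetMatrix (q : Q) : Matrix ι ι ℝ :=
  fun r => signRep S (q.out + affineHom e (e r, 0))

lemma isHadamardMatrix_cosetMatrix [Fintype ι] (hS : IsMaximalHadamardSet S) (q : Q) :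
    IsHadamardMatrix (cosetMatrix e S q) :=
  ⟨fun _ => hS.1 _ (signRep_mem hS _), fun _ _ hrr' => sum_signRep_mul_signRep
    (sum_signVec_add_affineHom_mul_eq_zero e _ (e.injective.ne hrr'))⟩

lemma disjoint_range_cosetMatrix {q q' : Q} (hqq' : q ≠ q') :
    Disjoint (Set.range (cosetMatrix e S q)) (Set.range (cosetMatrix e S q')) := by
  have hmk : ∀ q r, (QuotientAddGroup.mk (q.out + affineHom e (e r, 0)) : Q) = q :=
    fun q r => (mk_add_affineHom e _ _).trans q.out_eq'
  rw [Set.disjoint_left]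
  rintro _ ⟨r, rfl⟩ ⟨r', hr'⟩
  apply hqq'
  rw [← hmk q r, ← hmk q' r']
  rcases eq_or_eq_add_one_of_signRep_eq hr' with h | h
  · rw [h]
  · rw [h, ← Function.const_one, ← affineHom_zero_left e, mk_add_affineHom]

lemma iUnion_range_cosetMatrix (hS : IsMaximalHadamardSet S) :
    ⋃ q : Q, Set.range (cosetMatrix e S q) = S := by
  refine subset_antisymm (Set.iUnion_subset fun q => Set.range_subset_iff.mpr fun r =>
    signRep_mem hS _) fun y hy => Set.mem_iUnion.mpr ?_
  obtain ⟨f, rfl⟩ := (hS.1 y hy).exists_signVec_eq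
  obtain ⟨⟨_, ⟨a, c⟩, rfl⟩, hout⟩ := QuotientAddGroup.mk_out_eq_add (affineSubgroup e) f
  refine ⟨f, e.symm (-a), ?_⟩
  have hf : f = (f : Q).out + affineHom e (-a, 0) + Function.const ι (-c) := by
    rw [hout, ← affineHom_zero_left, add_assoc, add_assoc, ← map_add, ← map_add]
    simp [CharTwo.add_self_eq_zero, Prod.mk_zero_zero]
  rw [cosetMatrix, e.apply_symm_apply, ← signRep_add_const hS _ (-c), ← hf, signRep_of_mem hy]

end cosetMatrix

theorem partition_maximal_hadamard_set (n : ℕ)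
    (S : Set (Fin (2 ^ n) → ℝ)) (hS : IsMaximalHadamardSet S) :
    ∃ H : Fin (2 ^ (2 ^ n - n - 1)) → Matrix (Fin (2 ^ n)) (Fin (2 ^ n)) ℝ,
      (∀ t, IsHadamardMatrix (H t)) ∧
      (Pairwise fun t s => Disjoint (Set.range fun r => H t r) (Set.range fun r => H s r)) ∧
      (⋃ t, Set.range fun r => H t r) = S := by
  let e : Fin (2 ^ n) ≃ (Fin n → ZMod 2) := (Fintype.equivFinOfCardEq (by simp)).symm
  let φ : Fin (2 ^ (2 ^ n - n - 1)) ≃ (Fin (2 ^ n) → ZMod 2) ⧸ affineSubgroup e :=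
    (Finite.equivFinOfCardEq (card_quotient_affineSubgroup e)).symm
  refine ⟨fun t => cosetMatrix e S (φ t), fun t => isHadamardMatrix_cosetMatrix e hS _,
    fun t s hts => disjoint_range_cosetMatrix e (φ.injective.ne hts), ?_⟩
  exact (φ.iSup_comp (g := fun q => Set.range (cosetMatrix e S q))).trans
    (iUnion_range_cosetMatrix e hS)
end

section
/- Let m ≥ 1. If some maximal set of distinct Hadamard vectors in dimension m can be partitioned into Hadamard matrices, then m = 2^n for some natural number n. -/
/-- `S` is partitioned into `k` Hadamard matrices: `S` is the disjoint union of the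
row sets of `k` Hadamard matrices of order `m`. -/
def PartitionedIntoHadamardMatrices {m : ℕ} (S : Set (Fin m → ℝ)) (k : ℕ) : Prop :=
  ∃ H : Fin k → Matrix (Fin m) (Fin m) ℝ,
    (∀ t, IsHadamardMatrix (H t)) ∧
    (Pairwise fun t s => Disjoint (Set.range fun r => H t r) (Set.range fun r => H s r)) ∧
    (⋃ t, Set.range fun r => H t r) = S

/-! A counting argument. There are `2 ^ m` Hadamard vectors and a maximal set `S` contains exactly
one of each pair `±x`, so `2 * |S| = 2 ^ m`. The rows of a Hadamard matrix are distinct (distinct rows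
are orthogonal, while a `±1` row has squared length `m ≠ 0`), so a partition of `S` into `k` Hadamard
matrices gives `|S| = k * m`. Hence `m` divides `2 ^ m` and is a power of two. -/

theorem IsHadamardVector.neg {ι : Type*} {x : ι → ℝ} (hx : IsHadamardVector x) :
    IsHadamardVector (-x) := fun i ↦ by
  rcases hx i with h | h <;> simp [h]

theorem setOf_isHadamardVector_eq_pi {ι : Type*} :
    {x : ι → ℝ | IsHadamardVector x} = Set.univ.pi fun _ ↦ {1, -1} := by
  ext x
  simp [IsHadamardVector]

theorem ncard_setOf_isHadamardVector {ι : Type*} [Fintype ι] :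
    {x : ι → ℝ | IsHadamardVector x}.ncard = 2 ^ Fintype.card ι := by
  rw [setOf_isHadamardVector_eq_pi, ← Nat.card_coe_set_eq, Nat.card_congr (Equiv.Set.univPi _),
    Nat.card_pi, Nat.card_coe_set_eq, Set.ncard_pair (by norm_num)]
  simp

theorem finite_setOf_isHadamardVector {ι : Type*} [Finite ι] :
    {x : ι → ℝ | IsHadamardVector x}.Finite := by
  rw [setOf_isHadamardVector_eq_pi]
  exact Set.Finite.pi fun _ ↦ Set.toFinite _

namespace IsMaximalHadamardSet

variable {ι : Type*} {S : Set (ι → ℝ)}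

theorem disjoint_neg (hS : IsMaximalHadamardSet S) : Disjoint S (-S) :=
  Set.disjoint_left.mpr fun x hx hnx ↦
    ((xor_iff_or_and_not_and _ _).mp (hS.2 x (hS.1 x hx))).2 ⟨hx, hnx⟩

theorem union_neg (hS : IsMaximalHadamardSet S) :
    S ∪ -S = {x | IsHadamardVector x} := by
  ext x
  refine ⟨?_, fun hx ↦ Xor.or (hS.2 x hx)⟩
  rintro (hx | hx)
  · exact hS.1 x hx
  · simpa using (hS.1 _ hx).neg

theorem two_mul_ncard [Fintype ι] (hS : IsMaximalHadamardSet S) :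
    2 * S.ncard = 2 ^ Fintype.card ι := by
  have hfin : S.Finite := finite_setOf_isHadamardVector.subset fun x hx ↦ hS.1 x hx
  rw [← ncard_setOf_isHadamardVector, ← hS.union_neg,
    Set.ncard_union_eq hS.disjoint_neg hfin hfin.neg, Set.ncard_neg, two_mul]

end IsMaximalHadamardSet

theorem IsHadamardMatrix.row_injective {ι : Type*} [Fintype ι] {H : Matrix ι ι ℝ}
    (hH : IsHadamardMatrix H) : Function.Injective H := by
  intro r r' hrr'
  by_contra hne
  have hsq : ∀ j, H r j * H r' j = 1 := fun j ↦ by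
    rw [← hrr']; rcases hH.1 r j with h | h <;> simp [h]
  have := hH.2 r r' hne
  simp only [hsq, Finset.sum_const, Finset.card_univ, nsmul_eq_mul, mul_one, Nat.cast_eq_zero,
    Fintype.card_eq_zero_iff] at this
  exact this.false r

theorem PartitionedIntoHadamardMatrices.ncard_eq {m k : ℕ} {S : Set (Fin m → ℝ)}
    (hS : PartitionedIntoHadamardMatrices S k) : S.ncard = k * m := by
  obtain ⟨H, hH, hdisj, rfl⟩ := hS
  rw [Set.ncard_iUnion_of_finite (fun _ ↦ Set.toFinite _) hdisj]
  simp [Set.ncard_range_of_injective (hH _).row_injective, finsum_eq_sum_of_fintype]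

theorem hadamard_partition_dim_pow_two_general (m : ℕ)
    (S : Set (Fin m → ℝ)) (hS : IsMaximalHadamardSet S)
    (k : ℕ) (hpart : PartitionedIntoHadamardMatrices S k) :
    ∃ n : ℕ, m = 2 ^ n := by
  have hcard : 2 * (k * m) = 2 ^ m := by
    simpa [hpart.ncard_eq] using hS.two_mul_ncard
  have hdvd : m ∣ 2 ^ m := ⟨2 * k, by rw [← hcard]; ring⟩
  obtain ⟨n, -, hn⟩ := (Nat.dvd_prime_pow Nat.prime_two).mp hdvd
  exact ⟨n, hn⟩

theorem hadamard_partition_dim_pow_two (m : ℕ) (hm : 1 ≤ m)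
    (S : Set (Fin m → ℝ)) (hS : IsMaximalHadamardSet S)
    (k : ℕ) (hpart : PartitionedIntoHadamardMatrices S k) :
    ∃ n : ℕ, m = 2 ^ n :=
  hadamard_partition_dim_pow_two_general m S hS k hpart
end

section
/- If there exists an m×m Hadamard matrix with m > 2, then 4 divides m. -/
/-!
Take three distinct rows `x, y, z` of the Hadamard matrix. Expanding and using orthogonality,
`∑ₖ (xₖ + yₖ)(xₖ + zₖ) = ∑ₖ xₖ² = m`. Since all entries are `±1`, each summand is `0` or `4`,
so `m` is `4` times the number of nonzero summands.
-/

open Finset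

lemma add_mul_add_eq_zero_or_eq_four {R : Type*} [CommRing R] {a b c : R}
    (ha : a = 1 ∨ a = -1) (hb : b = 1 ∨ b = -1) (hc : c = 1 ∨ c = -1) :
    (a + b) * (a + c) = 0 ∨ (a + b) * (a + c) = 4 := by
  rcases ha with rfl | rfl <;> rcases hb with rfl | rfl <;> rcases hc with rfl | rfl <;>
    norm_num

lemma Finset.sum_eq_card_filter_nsmul {α M : Type*} [AddCommMonoid M] [DecidableEq M]
    (s : Finset α) {f : α → M} {c : M} (hf : ∀ a ∈ s, f a = 0 ∨ f a = c) :
    ∑ a ∈ s, f a = #{a ∈ s | f a = c} • c := by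
  calc ∑ a ∈ s, f a = ∑ a ∈ s, if f a = c then f a else 0 :=
        sum_congr rfl fun a ha => by rcases hf a ha with h | h <;> simp [h]
    _ = ∑ a ∈ s with f a = c, c := by
        rw [← sum_filter]; exact sum_congr rfl fun a ha => (mem_filter.mp ha).2
    _ = #{a ∈ s | f a = c} • c := sum_const c

theorem IsHadamardVector.sum_mul_self {ι : Type*} [Fintype ι] {x : ι → ℝ}
    (hx : IsHadamardVector x) : ∑ k, x k * x k = Fintype.card ι := by
  simp [fun k => mul_self_eq_one_iff.mpr (hx k)]

namespace IsHadamardMatrix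

variable {ι : Type*} [Fintype ι] {H : Matrix ι ι ℝ}

theorem sum_add_mul_add (hH : IsHadamardMatrix H) {i j l : ι}
    (hij : i ≠ j) (hil : i ≠ l) (hjl : j ≠ l) :
    ∑ k, (H i k + H j k) * (H i k + H l k) = Fintype.card ι := by
  simp only [add_mul, mul_add, sum_add_distrib, IsHadamardVector.sum_mul_self (hH.1 i),
    hH.2 i l hil, hH.2 j i hij.symm, hH.2 j l hjl, add_zero]

theorem four_dvd_card (hH : IsHadamardMatrix H) (hcard : 2 < Fintype.card ι) :
    4 ∣ Fintype.card ι := by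
  obtain ⟨i, j, l, hij, hil, hjl⟩ := Fintype.two_lt_card_iff.mp hcard
  have hterm : ∀ k ∈ (univ : Finset ι),
      (H i k + H j k) * (H i k + H l k) = 0 ∨ (H i k + H j k) * (H i k + H l k) = 4 :=
    fun k _ => add_mul_add_eq_zero_or_eq_four (hH.1 i k) (hH.1 j k) (hH.1 l k)
  have hcount : (Fintype.card ι : ℝ) = #{k | (H i k + H j k) * (H i k + H l k) = 4} • 4 := by
    rw [← hH.sum_add_mul_add hij hil hjl, sum_eq_card_filter_nsmul _ hterm]
  rw [nsmul_eq_mul] at hcount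
  exact Dvd.intro_left _ (by exact_mod_cast hcount.symm)

end IsHadamardMatrix

theorem hadamard_order_div_four (m : ℕ) (hm : 2 < m)
    (h : ∃ H : Matrix (Fin m) (Fin m) ℝ, IsHadamardMatrix H) :
    4 ∣ m := by
  obtain ⟨H, hH⟩ := h
  simpa using hH.four_dvd_card (by simpa using hm)
end
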